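/- Let λ_1, …, λ_n be pairwise distinct reals, G_0 = diag(1/Δ_1, …, 1/Δ_n) with Δ_i = ∏_{k≠i}(λ_i − λ_k), and J_V the Jacobian of q_i = (-1)^i σ_i(λ). Then G_0(q) = J_V G_0 J_V^T is the Hankel matrix with entries G_0(q)^{ij} = q_{i+j-n-1} for i+j ≥ n+1 (with the convention q_0 = 1), and G_0(q)^{ij} = 0 for i+j ≤ n. -/

import Mathlib

/-- The `i`-th elementary symmetric polynomial `σ_i(λ₁,…,λ_n)`. -/
noncomputable def esymmF (n i : ℕ) (l : Fin n → ℝ) : ℝ :=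
  ∑ s ∈ Finset.powersetCard i Finset.univ, ∏ j ∈ s, l j

/-- `ρ_i = (-1)^i σ_i(λ)`. -/
noncomputable def rho (n i : ℕ) (l : Fin n → ℝ) : ℝ :=
  (-1) ^ i * esymmF n i l

/-- Partial derivative `∂f/∂λ_j` evaluated at `l`. -/
noncomputable def pd (n : ℕ) (f : (Fin n → ℝ) → ℝ) (l : Fin n → ℝ) (j : Fin n) : ℝ :=
  deriv (fun t => f (Function.update l j t)) (l j)

/-- `Δ_j = ∏_{k≠j} (λ_j - λ_k)`. -/
noncomputable def Delta (n : ℕ) (l : Fin n → ℝ) (j : Fin n) : ℝ :=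
  ∏ k ∈ Finset.univ.erase j, (l j - l k)


open Finset Polynomial

noncomputable def Esub {n : ℕ} (l : Fin n → ℝ) (s : Finset (Fin n)) (a : ℕ) : ℝ :=
  ∑ t ∈ s.powersetCard a, ∏ i ∈ t, l i

lemma esymmF_update (n a : ℕ) (l : Fin n → ℝ) (j : Fin n) (x : ℝ) :
    esymmF n (a+1) (Function.update l j x)
      = Esub l (Finset.univ.erase j) (a+1) + x * Esub l (Finset.univ.erase j) a := by
  classical
  have hins : insert j (Finset.univ.erase j) = (Finset.univ : Finset (Fin n)) := by
    simp
  have hsplit : Finset.powersetCard (a+1) (Finset.univ : Finset (Fin n)) =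
      Finset.powersetCard (a+1) (Finset.univ.erase j)
        ∪ (Finset.powersetCard a (Finset.univ.erase j)).image (insert j) := by
    conv_lhs => rw [← hins]
    exact Finset.powersetCard_succ_insert (Finset.notMem_erase j _) a
  have hdisj : Disjoint (Finset.powersetCard (a+1) (Finset.univ.erase j))
      ((Finset.powersetCard a (Finset.univ.erase j)).image (insert j)) := by
    rw [Finset.disjoint_left]
    intro s hs hs'
    rw [Finset.mem_powersetCard] at hs
    obtain ⟨t, ht, rfl⟩ := Finset.mem_image.mp hs'
    exact (Finset.notMem_erase j _) (hs.1 (Finset.mem_insert_self j t))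
  rw [esymmF, hsplit, Finset.sum_union hdisj]
  congr 1
  · apply Finset.sum_congr rfl
    intro s hs
    rw [Finset.mem_powersetCard] at hs
    apply Finset.prod_congr rfl
    intro i hi
    have : i ≠ j := fun h => Finset.notMem_erase j _ (hs.1 (h ▸ hi))
    simp [Function.update_of_ne this]
  · rw [Finset.sum_image]
    · rw [Esub, Finset.mul_sum]
      apply Finset.sum_congr rfl
      intro t ht
      rw [Finset.mem_powersetCard] at ht
      have hjt : j ∉ t := fun h => Finset.notMem_erase j _ (ht.1 h)
      rw [Finset.prod_insert hjt, Function.update_self]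
      congr 1
      apply Finset.prod_congr rfl
      intro i hi
      have : i ≠ j := fun h => hjt (h ▸ hi)
      simp [Function.update_of_ne this]
    · intro s hs t ht hst
      rw [Finset.mem_coe, Finset.mem_powersetCard] at hs ht
      have hjs : j ∉ s := fun h => Finset.notMem_erase j _ (hs.1 h)
      have hjt : j ∉ t := fun h => Finset.notMem_erase j _ (ht.1 h)
      have := congrArg (Finset.erase · j) hst
      simpa [Finset.erase_insert hjs, Finset.erase_insert hjt] using this

lemma pd_rho (n a : ℕ) (l : Fin n → ℝ) (j : Fin n) :
    pd n (rho n (a+1)) l j = (-1)^(a+1) * Esub l (Finset.univ.erase j) a := by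
  unfold pd rho
  have h : (fun t => (-1:ℝ)^(a+1) * esymmF n (a+1) (Function.update l j t))
      = fun t : ℝ => ((-1:ℝ)^(a+1) * Esub l (Finset.univ.erase j) a) * t
          + (-1:ℝ)^(a+1) * Esub l (Finset.univ.erase j) (a+1) := by
    funext t
    rw [esymmF_update]
    ring
  rw [h]
  have hd : HasDerivAt (fun t : ℝ => ((-1:ℝ)^(a+1) * Esub l (Finset.univ.erase j) a) * t
      + (-1:ℝ)^(a+1) * Esub l (Finset.univ.erase j) (a+1))
      ((-1:ℝ)^(a+1) * Esub l (Finset.univ.erase j) a) (l j) := by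
    simpa using ((hasDerivAt_id (l j)).const_mul
      ((-1:ℝ)^(a+1) * Esub l (Finset.univ.erase j) a)).add_const
        ((-1:ℝ)^(a+1) * Esub l (Finset.univ.erase j) (a+1))
  exact hd.deriv

lemma nodal_eq_sum (n : ℕ) (l : Fin n → ℝ) (s : Finset (Fin n)) :
    (∏ i ∈ s, (X - C (l i)) : ℝ[X]) =
      ∑ a ∈ Finset.range (s.card + 1), C ((-1:ℝ)^a * Esub l s a) * X ^ (s.card - a) := by
  have h := Multiset.prod_X_sub_X_eq_sum_esymm (s.val.map l)
  rw [Multiset.map_map] at h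
  have hcard : Multiset.card (s.val.map l) = s.card := by simp
  rw [hcard] at h
  have h2 : (∏ i ∈ s, (X - C (l i)) : ℝ[X]) = (Multiset.map (fun i => X - C (l i)) s.val).prod := rfl
  rw [h2]
  rw [show (Multiset.map (fun i => X - C (l i)) s.val)
      = Multiset.map ((fun t => X - C t) ∘ l) s.val from rfl, h]
  apply Finset.sum_congr rfl
  intro a _
  rw [Finset.esymm_map_val, map_mul, map_pow, map_neg, map_one]
  simp only [Esub, Finset.sum]
  ring

lemma eval_nodal_sum (n : ℕ) (l : Fin n → ℝ) (s : Finset (Fin n)) (x : ℝ) :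
    (∏ i ∈ s, (x - l i)) =
      ∑ a ∈ Finset.range (s.card + 1), (-1:ℝ)^a * Esub l s a * x ^ (s.card - a) := by
  have := congrArg (Polynomial.eval x) (nodal_eq_sum n l s)
  rw [Polynomial.eval_prod] at this
  simp only [Polynomial.eval_sub, Polynomial.eval_X, Polynomial.eval_C,
    Polynomial.eval_finset_sum, Polynomial.eval_mul, Polynomial.eval_pow] at this
  rw [this]

lemma claimA (n : ℕ) (l : Fin n → ℝ) (j k : Fin n) :
    ∑ a : Fin n, pd n (rho n ((a:ℕ)+1)) l j * (l k)^(n-1-(a:ℕ))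
      = - (if j = k then Delta n l j else 0) := by
  classical
  have hn : 0 < n := j.pos
  have hcard : (Finset.univ.erase j).card = n - 1 := by
    rw [Finset.card_erase_of_mem (Finset.mem_univ j), Finset.card_univ, Fintype.card_fin]
  have key : ∏ i ∈ Finset.univ.erase j, (l k - l i)
      = ∑ a ∈ Finset.range n, (-1:ℝ)^a * Esub l (Finset.univ.erase j) a * (l k)^(n-1-a) := by
    have := eval_nodal_sum n l (Finset.univ.erase j) (l k)
    rw [hcard, Nat.sub_add_cancel hn] at this
    exact this
  have hL : ∑ a : Fin n, pd n (rho n ((a:ℕ)+1)) l j * (l k)^(n-1-(a:ℕ))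
      = - ∑ a ∈ Finset.range n, (-1:ℝ)^a * Esub l (Finset.univ.erase j) a * (l k)^(n-1-a) := by
    rw [← Finset.sum_neg_distrib]
    rw [← Fin.sum_univ_eq_sum_range
      (fun a => -((-1:ℝ)^a * Esub l (Finset.univ.erase j) a * (l k)^(n-1-a))) n]
    apply Finset.sum_congr rfl
    intro a _
    rw [pd_rho]
    ring
  rw [hL, ← key]
  by_cases h : j = k
  · subst h
    simp [Delta]
  · rw [if_neg h]
    rw [Finset.prod_eq_zero (Finset.mem_erase.mpr ⟨fun hh => h hh.symm, Finset.mem_univ k⟩) (sub_self (l k))]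

lemma P_expand (n : ℕ) (l : Fin n → ℝ) :
    (∏ i : Fin n, (X - C (l i)) : ℝ[X]) =
      ∑ m ∈ Finset.range (n+1), C (rho n (n - m) l) * X ^ m := by
  have h := nodal_eq_sum n l Finset.univ
  rw [Finset.card_univ, Fintype.card_fin] at h
  rw [h, ← Finset.sum_range_reflect]
  apply Finset.sum_congr rfl
  intro a ha
  rw [Finset.mem_range, Nat.lt_succ_iff] at ha
  have h1 : n + 1 - 1 - a = n - a := by omega
  have h2 : n - (n - a) = a := by omega
  rw [h1, h2, rho]
  rfl

lemma evalP (n : ℕ) (l : Fin n → ℝ) (x : ℝ) :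
    ∑ m ∈ Finset.range (n+1), rho n (n - m) l * x^m = ∏ i : Fin n, (x - l i) := by
  have := congrArg (Polynomial.eval x) (P_expand n l)
  rw [Polynomial.eval_prod] at this
  simp only [Polynomial.eval_sub, Polynomial.eval_X, Polynomial.eval_C,
    Polynomial.eval_finset_sum, Polynomial.eval_mul, Polynomial.eval_pow] at this
  rw [← this]

lemma evalP' (n : ℕ) (l : Fin n → ℝ) (x : ℝ) :
    Polynomial.eval x (Polynomial.derivative (∏ i : Fin n, (X - C (l i)) : ℝ[X]))
      = ∑ s ∈ Finset.range n, rho n (n-1-s) l * ((s:ℝ)+1) * x^s := by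
  rw [P_expand, map_sum]
  simp only [Polynomial.derivative_C_mul_X_pow, Polynomial.eval_finset_sum,
    Polynomial.eval_mul, Polynomial.eval_C, Polynomial.eval_pow, Polynomial.eval_X]
  rw [Finset.sum_range_succ']
  simp only [Nat.cast_zero, mul_zero, zero_mul, add_zero, Nat.cast_ofNat]
  apply Finset.sum_congr rfl
  intro s _
  have h1 : n - (s+1) = n - 1 - s := by omega
  have h2 : s + 1 - 1 = s := rfl
  rw [h1, h2]
  push_cast
  ring

lemma evalP'_node (n : ℕ) (l : Fin n → ℝ) (j : Fin n) :
    Polynomial.eval (l j) (Polynomial.derivative (∏ i : Fin n, (X - C (l i)) : ℝ[X]))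
      = Delta n l j := by
  classical
  have h1 : (∏ i : Fin n, (X - C (l i)) : ℝ[X]) = Lagrange.nodal Finset.univ l :=
    (Lagrange.nodal_eq _ _).symm
  rw [h1, Lagrange.eval_nodal_derivative_eval_node_eq (Finset.mem_univ j),
    Lagrange.eval_nodal]
  unfold Delta
  convert rfl

lemma triangle_sum (n : ℕ) (F : ℕ → ℕ → ℝ) :
    ∑ u ∈ Finset.range n, ∑ v ∈ Finset.range (n - u), F u v
      = ∑ s ∈ Finset.range n, ∑ t ∈ Finset.range (s+1), F t (s - t) := by
  rw [Finset.sum_sigma', Finset.sum_sigma']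
  apply Finset.sum_nbij' (i := fun p => (⟨p.1 + p.2, p.1⟩ : (_ : ℕ) × ℕ))
    (j := fun p => (⟨p.2, p.1 - p.2⟩ : (_ : ℕ) × ℕ))
  · intro p hp
    simp only [Finset.mem_sigma, Finset.mem_range] at hp ⊢
    omega
  · intro p hp
    simp only [Finset.mem_sigma, Finset.mem_range] at hp ⊢
    omega
  · intro p hp
    obtain ⟨a, b⟩ := p
    simp only [Finset.mem_sigma, Finset.mem_range] at hp
    simp only [Sigma.mk.inj_iff, heq_eq_eq]
    exact ⟨trivial, by omega⟩
  · intro p hp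
    obtain ⟨a, b⟩ := p
    simp only [Finset.mem_sigma, Finset.mem_range] at hp
    simp only [Sigma.mk.inj_iff, heq_eq_eq]
    exact ⟨by omega, trivial⟩
  · intro p hp
    simp only [Finset.mem_sigma, Finset.mem_range] at hp
    have : p.1 + p.2 - p.1 = p.2 := by omega
    rw [this]

lemma claimB (n : ℕ) (l : Fin n → ℝ) (hl : Function.Injective l) (j k : Fin n) :
    ∑ a : Fin n, ∑ b : Fin n, l j ^ (n-1-(a:ℕ)) *
        (if n ≤ (a:ℕ)+(b:ℕ)+1 then rho n ((a:ℕ)+(b:ℕ)+1-n) l else 0) * l k ^ (n-1-(b:ℕ))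
      = if j = k then Delta n l j else 0 := by
  classical
  have hn : 0 < n := j.pos
  have step1 : (∑ a : Fin n, ∑ b : Fin n, l j ^ (n-1-(a:ℕ)) *
        (if n ≤ (a:ℕ)+(b:ℕ)+1 then rho n ((a:ℕ)+(b:ℕ)+1-n) l else 0) * l k ^ (n-1-(b:ℕ)))
      = ∑ a ∈ Finset.range n, ∑ b ∈ Finset.range n, l j ^ (n-1-a) *
        (if n ≤ a+b+1 then rho n (a+b+1-n) l else 0) * l k ^ (n-1-b) := by
    rw [← Fin.sum_univ_eq_sum_range (fun a => ∑ b ∈ Finset.range n, l j ^ (n-1-a) *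
        (if n ≤ a+b+1 then rho n (a+b+1-n) l else 0) * l k ^ (n-1-b)) n]
    apply Finset.sum_congr rfl
    intro a _
    exact Fin.sum_univ_eq_sum_range (fun b => l j ^ (n-1-(a:ℕ)) *
        (if n ≤ (a:ℕ)+b+1 then rho n ((a:ℕ)+b+1-n) l else 0) * l k ^ (n-1-b)) n
  have step2 : ∑ a ∈ Finset.range n, ∑ b ∈ Finset.range n, l j ^ (n-1-a) *
        (if n ≤ a+b+1 then rho n (a+b+1-n) l else 0) * l k ^ (n-1-b)
      = ∑ u ∈ Finset.range n, ∑ v ∈ Finset.range n,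
          (if u+v+1 ≤ n then rho n (n-1-(u+v)) l * l j^u * l k^v else 0) := by
    rw [← Finset.sum_range_reflect]
    apply Finset.sum_congr rfl
    intro u hu
    rw [Finset.mem_range] at hu
    rw [← Finset.sum_range_reflect]
    apply Finset.sum_congr rfl
    intro v hv
    rw [Finset.mem_range] at hv
    have e1 : n - 1 - (n-1-u) = u := by omega
    have e2 : n - 1 - (n-1-v) = v := by omega
    rw [e1, e2]
    by_cases hc : u + v + 1 ≤ n
    · rw [if_pos (by omega), if_pos hc]
      have e3 : (n-1-u) + (n-1-v) + 1 - n = n-1-(u+v) := by omega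
      rw [e3]; ring
    · rw [if_neg (by omega), if_neg hc]
      ring
  have step3 : ∑ u ∈ Finset.range n, ∑ v ∈ Finset.range n,
          (if u+v+1 ≤ n then rho n (n-1-(u+v)) l * l j^u * l k^v else 0)
      = ∑ s ∈ Finset.range n, rho n (n-1-s) l *
          ∑ t ∈ Finset.range (s+1), l j^t * l k^(s-t) := by
    have h1 : ∀ u ∈ Finset.range n, (∑ v ∈ Finset.range n,
          if u+v+1 ≤ n then rho n (n-1-(u+v)) l * l j^u * l k^v else 0)
        = ∑ v ∈ Finset.range (n-u), rho n (n-1-(u+v)) l * l j^u * l k^v := by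
      intro u hu
      rw [Finset.mem_range] at hu
      rw [← Finset.sum_subset (Finset.range_subset_range.mpr (show n - u ≤ n by omega))
        (fun v hv hv2 => by
          rw [Finset.mem_range] at hv
          rw [Finset.mem_range, not_lt] at hv2
          exact if_neg (by omega))]
      apply Finset.sum_congr rfl
      intro v hv
      rw [Finset.mem_range] at hv
      exact if_pos (by omega)
    rw [Finset.sum_congr rfl h1,
      triangle_sum n (fun u v => rho n (n-1-(u+v)) l * l j^u * l k^v)]
    apply Finset.sum_congr rfl
    intro s hs
    rw [Finset.mul_sum]
    apply Finset.sum_congr rfl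
    intro t ht
    rw [Finset.mem_range, Nat.lt_succ_iff] at ht
    have e : t + (s - t) = s := by omega
    rw [e]
    ring
  rw [step1, step2, step3]
  by_cases h : j = k
  · subst h
    rw [if_pos rfl]
    have hin : ∀ s ∈ Finset.range n, rho n (n-1-s) l *
          (∑ t ∈ Finset.range (s+1), l j^t * l j^(s-t))
        = rho n (n-1-s) l * ((s:ℝ)+1) * l j^s := by
      intro s _
      have : ∀ t ∈ Finset.range (s+1), l j^t * l j^(s-t) = l j^s := by
        intro t ht
        rw [Finset.mem_range, Nat.lt_succ_iff] at ht
        rw [← pow_add]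
        congr 1
        omega
      rw [Finset.sum_congr rfl this, Finset.sum_const, Finset.card_range,
        nsmul_eq_mul]
      push_cast
      ring
    rw [Finset.sum_congr rfl hin, ← evalP' n l (l j), evalP'_node]
  · rw [if_neg h]
    have hxy : l j - l k ≠ 0 := sub_ne_zero.mpr (fun hh => h (hl hh))
    have hgeom : ∀ s : ℕ, (∑ t ∈ Finset.range (s+1), l j^t * l k^(s-t)) * (l j - l k)
        = l j^(s+1) - l k^(s+1) := by
      intro s
      have hg := geom_sum₂_mul (l j) (l k) (s+1)
      have : ∀ t ∈ Finset.range (s+1), l j^t * l k^(s+1-1-t) = l j^t * l k^(s-t) := by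
        intro t _
        norm_num
      rw [Finset.sum_congr rfl this] at hg
      exact hg
    have hsum : ∀ z : ℝ, ∑ s ∈ Finset.range n, rho n (n-1-s) l * z^(s+1)
        = (∏ i : Fin n, (z - l i)) - rho n n l := by
      intro z
      have h0 := evalP n l z
      rw [Finset.sum_range_succ'] at h0
      have hc : ∀ i ∈ Finset.range n, rho n (n-(i+1)) l * z^(i+1)
          = rho n (n-1-i) l * z^(i+1) := by
        intro i _
        congr 2
        omega
      rw [Finset.sum_congr rfl hc] at h0
      simp only [Nat.sub_zero, pow_zero, mul_one] at h0
      linarith [h0]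
    have hz1 : (∏ i : Fin n, (l j - l i)) = 0 :=
      Finset.prod_eq_zero (Finset.mem_univ j) (sub_self (l j))
    have hz2 : (∏ i : Fin n, (l k - l i)) = 0 :=
      Finset.prod_eq_zero (Finset.mem_univ k) (sub_self (l k))
    have hmul : (∑ s ∈ Finset.range n, rho n (n-1-s) l *
          ∑ t ∈ Finset.range (s+1), l j^t * l k^(s-t)) * (l j - l k) = 0 := by
      rw [Finset.sum_mul]
      have : ∀ s ∈ Finset.range n, (rho n (n-1-s) l *
            (∑ t ∈ Finset.range (s+1), l j^t * l k^(s-t))) * (l j - l k)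
          = rho n (n-1-s) l * l j^(s+1) - rho n (n-1-s) l * l k^(s+1) := by
        intro s _
        rw [mul_assoc, hgeom s]
        ring
      rw [Finset.sum_congr rfl this, Finset.sum_sub_distrib, hsum (l j), hsum (l k),
        hz1, hz2]
      ring
    exact (mul_eq_zero.mp hmul).resolve_right hxy

theorem metric_G0_in_viete (n : ℕ) (l : Fin n → ℝ) (hl : Function.Injective l)
    (JV : Matrix (Fin n) (Fin n) ℝ)
    (hJV : ∀ i j, JV i j = pd n (rho n ((i : ℕ) + 1)) l j) :
    JV * Matrix.diagonal (fun i => 1 / Delta n l i) * JV.transpose =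
      Matrix.of (fun i j : Fin n =>
        if n ≤ (i : ℕ) + (j : ℕ) + 1 then rho n ((i : ℕ) + (j : ℕ) + 1 - n) l else 0) := by
  classical
  rcases Nat.eq_zero_or_pos n with hn | hn
  · subst hn
    ext i j
    exact i.elim0
  set W : Matrix (Fin n) (Fin n) ℝ := Matrix.of (fun a b => l b ^ (n - 1 - (a:ℕ))) with hWdef
  set D : Matrix (Fin n) (Fin n) ℝ := Matrix.diagonal (Delta n l) with hDdef
  set G0 : Matrix (Fin n) (Fin n) ℝ := Matrix.diagonal (fun i => 1 / Delta n l i) with hG0def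
  set H : Matrix (Fin n) (Fin n) ℝ := Matrix.of (fun i j : Fin n =>
      if n ≤ (i : ℕ) + (j : ℕ) + 1 then rho n ((i : ℕ) + (j : ℕ) + 1 - n) l else 0) with hHdef
  have hΔ : ∀ i, Delta n l i ≠ 0 := by
    intro i
    rw [Delta]
    apply Finset.prod_ne_zero_iff.mpr
    intro k hk
    rw [Finset.mem_erase] at hk
    exact sub_ne_zero.mpr (fun hh => hk.1 (hl hh).symm)
  -- Claim A in matrix form
  have hA : JV.transpose * W = -D := by
    ext j k
    rw [Matrix.mul_apply]
    have : ∀ a : Fin n, JV.transpose j a * W a k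
        = pd n (rho n ((a:ℕ)+1)) l j * l k ^ (n-1-(a:ℕ)) := by
      intro a
      rw [Matrix.transpose_apply, hJV]
      rfl
    rw [Finset.sum_congr rfl (fun a _ => this a), claimA n l j k]
    rw [hDdef]
    simp [Matrix.diagonal_apply]
  -- Claim B in matrix form
  have hB : W.transpose * H * W = D := by
    ext j k
    rw [Matrix.mul_apply]
    have : ∀ b : Fin n, (W.transpose * H) j b * W b k
        = ∑ a : Fin n, l j ^ (n-1-(a:ℕ)) *
            (if n ≤ (a:ℕ)+(b:ℕ)+1 then rho n ((a:ℕ)+(b:ℕ)+1-n) l else 0)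
            * l k ^ (n-1-(b:ℕ)) := by
      intro b
      rw [Matrix.mul_apply, Finset.sum_mul]
      apply Finset.sum_congr rfl
      intro a _
      rw [Matrix.transpose_apply]
      rfl
    rw [Finset.sum_congr rfl (fun b _ => this b), Finset.sum_comm, claimB n l hl j k]
    rw [hDdef]
    simp [Matrix.diagonal_apply]
  -- W is invertible
  have hdetW : IsUnit W.det := by
    have hWsub : W = ((Matrix.vandermonde l).transpose).submatrix
        (Fin.revPerm : Equiv.Perm (Fin n)) id := by
      ext a b
      rw [Matrix.submatrix_apply, Matrix.transpose_apply, Matrix.vandermonde]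
      show l b ^ (n - 1 - (a:ℕ)) = l b ^ ((Fin.revPerm a : Fin n) : ℕ)
      congr 1
      simp [Fin.val_rev]
      omega
    rw [hWsub, Matrix.det_permute, Matrix.det_transpose]
    apply isUnit_iff_ne_zero.mpr
    apply mul_ne_zero
    · rcases Int.units_eq_one_or (Equiv.Perm.sign (Fin.revPerm : Equiv.Perm (Fin n))) with hs | hs
        <;> rw [hs] <;> norm_num
    · exact Matrix.det_vandermonde_ne_zero_iff.mpr hl
  have hdetWT : IsUnit W.transpose.det := by
    rwa [Matrix.det_transpose]
  -- (-D) * G0 * (-D) = D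
  have hDGD : (-D) * G0 * (-D) = D := by
    rw [hDdef, hG0def, Matrix.neg_mul, Matrix.mul_neg, Matrix.neg_mul, neg_neg,
      Matrix.diagonal_mul_diagonal, Matrix.diagonal_mul_diagonal]
    funext i
    field_simp [hΔ i]
  -- key identity
  have key : W.transpose * (JV * G0 * JV.transpose * W) = W.transpose * (H * W) := by
    have hWTJV : W.transpose * JV = -D := by
      have := congrArg Matrix.transpose hA
      rwa [Matrix.transpose_mul, Matrix.transpose_transpose, Matrix.transpose_neg,
        Matrix.diagonal_transpose] at this
    calc W.transpose * (JV * G0 * JV.transpose * W)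
        = (W.transpose * JV) * G0 * (JV.transpose * W) := by
          simp only [Matrix.mul_assoc]
      _ = (-D) * G0 * (-D) := by rw [hWTJV, hA]
      _ = D := hDGD
      _ = W.transpose * (H * W) := by rw [← Matrix.mul_assoc, hB]
  have h2 : JV * G0 * JV.transpose * W = H * W := by
    have h4 := congrArg (fun X => W.transpose⁻¹ * X) key
    simpa only [Matrix.nonsing_inv_mul_cancel_left _ _ hdetWT] using h4
  have h3 : JV * G0 * JV.transpose = H := by
    have := congrArg (· * W⁻¹) h2
    simpa [Matrix.mul_nonsing_inv_cancel_right _ _ hdetW] using this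
  exact h3
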